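/- Let R be an integral domain with quotient field K, let V be a valuation overring of R (a valuation domain with R ⊆ V ⊆ K and quotient field K) with maximal ideal M, and let ⋆ be a semistar operation on R. Then: (a) V^⋆ = V if and only if I^⋆ ⊆ (IV)^{v_V} for every R-submodule I of K, where (IV)^{v_V} = (V : (V : IV)); (b) M^⋆ = M if and only if I^⋆ ⊆ IV for every R-submodule I of K. (Here V and M are viewed as R-submodules of K, and IV denotes the V-submodule of K generated by I.) -/
import Mathlib


open Pointwise

section Defs

variable {R : Type*} (K : Type*) [CommRing R] [IsDomain R] [Field K] [Algebra R K]
  [IsFractionRing R K]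

/-- A function `f` on the `R`-submodules of the quotient field `K` is a semistar operation if it
is extensive, idempotent, monotone and commutes with scaling by elements of `K`. -/
def IsSemistarOperation (f : Submodule R K → Submodule R K) : Prop :=
  (∀ I : Submodule R K, I ≤ f I) ∧
  (∀ I : Submodule R K, f (f I) = f I) ∧
  (∀ I J : Submodule R K, I ≤ J → f I ≤ f J) ∧
  (∀ (x : K) (I : Submodule R K), f (x • I) = x • f I)

/-- A semistar operation is stable if it distributes over finite intersections. -/
def IsStableOperation (f : Submodule R K → Submodule R K) : Prop :=
  ∀ I J : Submodule R K, f (I ⊓ J) = f I ⊓ f J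

/-- An ideal of `R`, viewed as an `R`-submodule of the quotient field `K`. -/
def idealToK (I : Ideal R) : Submodule R K :=
  Submodule.map (Algebra.linearMap R K) I

/-- A Prüfer domain is an integral domain in which every nonzero finitely generated ideal is
invertible (as a fractional ideal, i.e. as a submodule of the quotient field). -/
def IsPruferDomain : Prop :=
  ∀ I : Ideal R, I ≠ ⊥ → I.FG → ∃ J : Submodule R K, idealToK K I * J = 1

/-- The localization `R_P` of `R` at the prime `P`, viewed as an `R`-submodule of the quotient
field `K`. -/
noncomputable def locSub (P : Ideal R) (hP : P.IsPrime) : Submodule R K :=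
  haveI := hP
  Subalgebra.toSubmodule
    (Localization.subalgebra K P.primeCompl
      (fun x hx => mem_nonZeroDivisors_of_ne_zero (fun h0 => hx (h0 ▸ P.zero_mem))))

/-- The `v`-operation of the valuation ring `R_P`, applied to the `R_P`-submodule of `K`
generated by (the image of) `I`: it sends `I` to `(R_P : (R_P : IR_P))`. -/
noncomputable def vOp (P : Ideal R) (hP : P.IsPrime) (I : Submodule R K) : Submodule R K :=
  locSub K P hP / (locSub K P hP / (I * locSub K P hP))

/-- The quasi-spectrum of a (stable) semistar operation: the set of primes `P` such that
`P^⋆ ∩ R = P`. -/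
def QSpec (f : Submodule R K → Submodule R K) : Set (Ideal R) :=
  {P | P.IsPrime ∧ f (idealToK K P) ⊓ 1 = idealToK K P}

/-- The pseudo-spectrum of a stable semistar operation: the set of primes `P` such that
`P^⋆ ∩ R = R` and `L^⋆ ∩ R = L` for some `P`-primary ideal `L`. -/
def PsSpec (f : Submodule R K → Submodule R K) : Set (Ideal R) :=
  {P | P.IsPrime ∧ f (idealToK K P) ⊓ 1 = 1 ∧
    ∃ L : Ideal R, L.IsPrimary ∧ L.radical = P ∧ f (idealToK K L) ⊓ 1 = idealToK K L}

/-- The normalized stable version of a stable semistar operation `f`: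
`I ↦ ⋂ {IR_P : P ∈ QSpec} ∩ ⋂ {(IR_P)^{v_{R_P}} : P ∈ PsSpec}`. -/
noncomputable def normStable (f : Submodule R K → Submodule R K) (I : Submodule R K) :
    Submodule R K :=
  (⨅ P : QSpec K f, I * locSub K P.1 P.2.1) ⊓
    ⨅ P : PsSpec K f, vOp K P.1 P.2.1 I

end Defs


section ValuationOverring

variable {R : Type*} (K : Type*) [CommRing R] [IsDomain R] [Field K] [Algebra R K]
  [IsFractionRing R K]

/-- A valuation overring `V` of `R` (a valuation subring of the quotient field `K` containing
the image of `R`), viewed as an `R`-submodule of `K`. -/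
def valSub (V : ValuationSubring K) (hV : ∀ r : R, algebraMap R K r ∈ V) : Submodule R K where
  carrier := V
  add_mem' := fun ha hb => add_mem ha hb
  zero_mem' := zero_mem _
  smul_mem' := fun r x hx => by
    rw [Algebra.smul_def]
    exact mul_mem (hV r) hx

/-- An ideal of a valuation overring `V` of `R`, viewed as an `R`-submodule of `K`. -/
def valIdealSub (V : ValuationSubring K) (hV : ∀ r : R, algebraMap R K r ∈ V) (M : Ideal V) :
    Submodule R K where
  carrier := Subtype.val '' (M : Set V)
  add_mem' := by
    rintro a b ⟨x, hx, rfl⟩ ⟨y, hy, rfl⟩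
    exact ⟨x + y, M.add_mem hx hy, rfl⟩
  zero_mem' := ⟨0, M.zero_mem, rfl⟩
  smul_mem' := by
    intro r x hx
    obtain ⟨y, hy, rfl⟩ := hx
    refine ⟨(⟨algebraMap R K r, hV r⟩ : V) * y, M.mul_mem_left _ hy, ?_⟩
    simp [Algebra.smul_def]

end ValuationOverring

/-- Let `V` be a valuation overring of `R` with maximal ideal `M`, and let `⋆` be a semistar
operation on `R`. Then: (a) `V^⋆ = V` iff `I^⋆ ⊆ (IV)^{v_V}` for all `I`; (b) `M^⋆ = M` iff
`I^⋆ ⊆ IV` for all `I`. -/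
theorem valuation_overring_closed_iff {R K : Type*} [CommRing R] [IsDomain R] [Field K] [Algebra R K]
    [IsFractionRing R K]
    (V : ValuationSubring K) (hV : ∀ r : R, algebraMap R K r ∈ V)
    (f : Submodule R K → Submodule R K) (hf : IsSemistarOperation K f) :
    (f (valSub K V hV) = valSub K V hV ↔
      ∀ I : Submodule R K,
        f I ≤ valSub K V hV / (valSub K V hV / (I * valSub K V hV))) ∧
    (f (valIdealSub K V hV (IsLocalRing.maximalIdeal V)) =
        valIdealSub K V hV (IsLocalRing.maximalIdeal V) ↔
      ∀ I : Submodule R K, f I ≤ I * valSub K V hV) := by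
  obtain ⟨hext, hidem, hmono, hsmul⟩ := hf
  set W := valSub K V hV with hWdef
  set M' := valIdealSub K V hV (IsLocalRing.maximalIdeal V) with hM'def
  have h1W : (1 : K) ∈ W := V.one_mem
  have hWW : W * W = W := by
    apply le_antisymm
    · exact Submodule.mul_le.2 fun a ha b hb => show a * b ∈ V from mul_mem ha hb
    · intro x hx
      simpa using Submodule.mul_mem_mul hx h1W
  have hIleIW : ∀ I : Submodule R K, I ≤ I * W := by
    intro I x hx
    simpa using Submodule.mul_mem_mul hx h1W
  have h1M' : (1 : K) ∉ M' := by
    rintro ⟨y, hy, hy1⟩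
    have : y = 1 := Subtype.ext hy1
    rw [this] at hy
    exact (IsLocalRing.maximalIdeal.isMaximal V).ne_top
      (Ideal.eq_top_of_isUnit_mem _ hy isUnit_one)
  constructor
  · constructor
    · intro hWstar I x hx
      rw [Submodule.mem_div_iff_forall_mul_mem]
      intro y hy
      have hyI : y • I ≤ W := by
        intro z hz
        obtain ⟨i, hi, rfl⟩ := Set.mem_smul_set.1 hz
        have : y * (i * 1) ∈ W :=
          Submodule.mem_div_iff_forall_mul_mem.1 hy _ (Submodule.mul_mem_mul hi h1W)
        simpa [smul_eq_mul] using this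
      have hle : y • f I ≤ W := by
        rw [← hsmul]
        calc f (y • I) ≤ f W := hmono _ _ hyI
          _ = W := hWstar
      have hxy : y • x ∈ y • f I := Submodule.smul_mem_pointwise_smul x y (f I) hx
      have := hle hxy
      simpa [smul_eq_mul, mul_comm] using this
    · intro h
      refine le_antisymm ((h W).trans ?_) (hext W)
      intro x hx
      rw [Submodule.mem_div_iff_forall_mul_mem] at hx
      have h1div : (1 : K) ∈ W / (W * W) := by
        rw [Submodule.mem_div_iff_forall_mul_mem]
        intro y hy
        rw [hWW] at hy
        simpa using hy
      simpa using hx 1 h1div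
  · constructor
    · intro hMstar I x hx
      by_contra hxIW
      have hx0 : x ≠ 0 := by rintro rfl; exact hxIW (Submodule.zero_mem _)
      have hIWW : (I * W) * W = I * W := by rw [mul_assoc, hWW]
      have hclaim : ∀ z ∈ I * W, x⁻¹ * z ∈ M' := by
        intro z hz
        rcases eq_or_ne z 0 with rfl | hz0
        · simpa using M'.zero_mem
        have hzV : ∀ v ∈ V, z * v ∈ I * W := by
          intro v hv
          rw [← hIWW]
          exact Submodule.mul_mem_mul hz hv
        have key : x * z⁻¹ ∉ V := by
          intro hmem
          apply hxIW
          have hxz : x = z * (x * z⁻¹) := by field_simp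
          rw [hxz]
          exact hzV _ hmem
        have hinvV : x⁻¹ * z ∈ V := by
          rcases V.mem_or_inv_mem (x⁻¹ * z) with hmem | hmem
          · exact hmem
          · exact absurd (by rwa [mul_inv, inv_inv] at hmem) key
        refine ⟨⟨x⁻¹ * z, hinvV⟩, ?_, rfl⟩
        rw [SetLike.mem_coe, IsLocalRing.mem_maximalIdeal, mem_nonunits_iff]
        intro hu
        obtain ⟨b, hb⟩ := hu.exists_right_inv
        have hb' : (x⁻¹ * z) * (b : K) = 1 := congrArg Subtype.val hb
        have hbeq : (b : K) = (x⁻¹ * z)⁻¹ :=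
          eq_inv_of_mul_eq_one_left (by rw [mul_comm]; exact hb')
        apply key
        have hmem : (x⁻¹ * z)⁻¹ ∈ V := hbeq ▸ b.2
        rwa [mul_inv, inv_inv] at hmem
      have hsmulle : x⁻¹ • (I * W) ≤ M' := by
        intro w hw
        obtain ⟨z, hz, rfl⟩ := Set.mem_smul_set.1 hw
        simpa [smul_eq_mul] using hclaim z hz
      have hIle : x⁻¹ • I ≤ x⁻¹ • (I * W) := by
        intro w hw
        obtain ⟨z, hz, rfl⟩ := Set.mem_smul_set.1 hw
        exact Submodule.smul_mem_pointwise_smul z x⁻¹ _ (hIleIW I hz)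
      have hle : x⁻¹ • f I ≤ M' := by
        rw [← hsmul]
        calc f (x⁻¹ • I) ≤ f (x⁻¹ • (I * W)) := hmono _ _ hIle
          _ ≤ f M' := hmono _ _ hsmulle
          _ = M' := hMstar
      have h1 : (1 : K) ∈ x⁻¹ • f I := by
        have := Submodule.smul_mem_pointwise_smul x x⁻¹ (f I) hx
        simpa [smul_eq_mul, inv_mul_cancel₀ hx0] using this
      exact h1M' (hle h1)
    · intro h
      refine le_antisymm ((h M').trans ?_) (hext M')
      refine Submodule.mul_le.2 ?_
      rintro m ⟨u, hu, rfl⟩ w hw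
      exact ⟨u * ⟨w, hw⟩, Ideal.mul_mem_right _ _ hu, rfl⟩
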